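/- Let G=(V,E) be a directed graph and v₀, v_g ∈ V. Then Reach(E,v₀) holds (the runner has a winning strategy in the turn-based reachability sabotage game RSG (G,v₀,v_g)) if and only if there exists a positional strategy σ_r for the runner in S^tb(G) such that every play of S^tb(G) from ((E,v₀),r) consistent with σ_r contains a state whose runner position is v_g (the ATL* statement ⟨⟨{r}⟩⟩ F g at ((E,v₀),r)). -/
import Mathlib


/-- A sabotage game-state: the set of remaining edges together with the runner's position. -/
abbrev GState (V : Type*) := Finset (V × V) × V

/-- The two agents: runner and demon. -/
inductive Agent : Type
  | r : Agent
  | d : Agent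
deriving DecidableEq

/-- A state of the turn-based sabotage game structure: a game-state plus the agent owning it. -/
abbrev TbState (V : Type*) := GState V × Agent

section Defs

variable {V : Type*} [DecidableEq V]

/-- Runner's available actions in the turn-based structure (`none` is skip). -/
def tbActR (s : TbState V) : Set (Option (V × V)) :=
  match s.2 with
  | Agent.r => {a | ∃ e ∈ s.1.1, e.1 = s.1.2 ∧ a = some e}
  | Agent.d => {none}

/-- Demon's available actions in the turn-based structure (`none` is skip). -/
def tbActD (s : TbState V) : Set (Option (V × V)) :=
  match s.2 with
  | Agent.r => {none}
  | Agent.d => {a | ∃ e ∈ s.1.1, a = some e}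

/-- Transition function of the turn-based sabotage game structure. -/
def tbDelta (s : TbState V) (ar ad : Option (V × V)) : TbState V :=
  match ar, ad with
  | some e, _ => ((s.1.1, e.2), Agent.d)
  | none, some e => ((s.1.1.erase e, s.1.2), Agent.r)
  | none, none => s

/-- `t` arises from `s` in the turn-based structure by the available action pair `(ar, ad)`. -/
def tbStepBy (s : TbState V) (ar ad : Option (V × V)) (t : TbState V) : Prop :=
  ar ∈ tbActR s ∧ ad ∈ tbActD s ∧ t = tbDelta s ar ad

/-- One-step transition relation of the turn-based structure. -/
def tbStep (s t : TbState V) : Prop := ∃ ar ad, tbStepBy s ar ad t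

/-- Runner's available actions in the concurrent structure. -/
def conActR (s : GState V) : Set (V × V) := {e | e ∈ s.1 ∧ e.1 = s.2}

/-- Demon's available actions in the concurrent structure. -/
def conActD (s : GState V) : Set (V × V) := {e | e ∈ s.1}

/-- Transition function of the concurrent sabotage game structure. -/
def conDelta (s : GState V) (er ed : V × V) : GState V :=
  if er = ed then s else (s.1.erase ed, er.2)

/-- `t` arises from `s` in the concurrent structure by the available action pair `(er, ed)`. -/
def conStepBy (s : GState V) (er ed : V × V) (t : GState V) : Prop :=
  er ∈ s.1 ∧ er.1 = s.2 ∧ ed ∈ s.1 ∧ t = conDelta s er ed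

/-- One-step transition relation of the concurrent structure. -/
def conStep (s t : GState V) : Prop := ∃ er ed, conStepBy s er ed t

/-- Runner's available actions in the general structure (`none` is skip, always available). -/
def genActR (s : GState V) : Set (Option (V × V)) :=
  {a | a = none ∨ ∃ e ∈ s.1, e.1 = s.2 ∧ a = some e}

/-- Demon's available actions in the general structure (`none` is skip, always available). -/
def genActD (s : GState V) : Set (Option (V × V)) :=
  {a | a = none ∨ ∃ e ∈ s.1, a = some e}

/-- Transition function of the general sabotage game structure. -/
def genDelta (s : GState V) (ar ad : Option (V × V)) : GState V :=
  match ar, ad with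
  | none, none => s
  | none, some ed => (s.1.erase ed, s.2)
  | some er, none => (s.1, er.2)
  | some er, some ed => if er = ed then s else (s.1.erase ed, er.2)

/-- `t` arises from `s` in the general structure by the available action pair `(ar, ad)`. -/
def genStepBy (s : GState V) (ar ad : Option (V × V)) (t : GState V) : Prop :=
  ar ∈ genActR s ∧ ad ∈ genActD s ∧ t = genDelta s ar ad

/-- One-step transition relation of the general structure. -/
def genStep (s t : GState V) : Prop := ∃ ar ad, genStepBy s ar ad t

/-- A (finite or infinite) play: a maximal sequence of states starting at `s₀`, where each state
arises from its predecessor by the step relation. `p n = none` means the play has already ended. -/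
def IsPlay {S : Type*} (step : S → S → Prop) (s₀ : S) (p : ℕ → Option S) : Prop :=
  p 0 = some s₀ ∧
  (∀ n t, p (n + 1) = some t → ∃ s, p n = some s ∧ step s t) ∧
  (∀ n s, p n = some s → (∃ t, step s t) → (p (n + 1)).isSome)

/-- The structural label of a game-state `(E', v)`: the proposition `p_v` (coded `Sum.inl v`)
together with the propositions `q_e` for `e ∈ E'` (coded `Sum.inr e`). -/
def label (s : GState V) : Set (V ⊕ (V × V)) :=
  {x | x = Sum.inl s.2 ∨ ∃ e ∈ s.1, x = Sum.inr e}

/-- `σ` is a positional runner strategy in the turn-based structure. -/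
def TbStratR (σ : TbState V → Option (V × V)) : Prop :=
  ∀ s, (tbActR s).Nonempty → σ s ∈ tbActR s

/-- `σ` is a positional demon strategy in the turn-based structure. -/
def TbStratD (σ : TbState V → Option (V × V)) : Prop :=
  ∀ s, (tbActD s).Nonempty → σ s ∈ tbActD s

/-- The play `p` is consistent with the runner strategy `σ` in the turn-based structure. -/
def TbConsR (σ : TbState V → Option (V × V)) (p : ℕ → Option (TbState V)) : Prop :=
  ∀ n s t, p n = some s → p (n + 1) = some t → ∃ ad, tbStepBy s (σ s) ad t

/-- The play `p` is consistent with the demon strategy `σ` in the turn-based structure. -/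
def TbConsD (σ : TbState V → Option (V × V)) (p : ℕ → Option (TbState V)) : Prop :=
  ∀ n s t, p n = some s → p (n + 1) = some t → ∃ ar, tbStepBy s ar (σ s) t

/-- The play `p` is consistent with both strategies in the turn-based structure. -/
def TbConsRD (σr σd : TbState V → Option (V × V)) (p : ℕ → Option (TbState V)) : Prop :=
  ∀ n s t, p n = some s → p (n + 1) = some t → tbStepBy s (σr s) (σd s) t

/-- `σ` is a positional runner strategy in the concurrent structure. -/
def ConStratR (σ : GState V → V × V) : Prop :=
  ∀ s, (conActR s).Nonempty → σ s ∈ conActR s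

/-- `σ` is a positional demon strategy in the concurrent structure. -/
def ConStratD (σ : GState V → V × V) : Prop :=
  ∀ s, (conActD s).Nonempty → σ s ∈ conActD s

/-- The play `p` is consistent with both strategies in the concurrent structure. -/
def ConConsRD (σr σd : GState V → V × V) (p : ℕ → Option (GState V)) : Prop :=
  ∀ n s t, p n = some s → p (n + 1) = some t → conStepBy s (σr s) (σd s) t

/-- Runner has a winning strategy in the turn-based reachability sabotage game with goal `vg`,
from the game-state `(E', v)`. -/
def Reach (vg : V) (E' : Finset (V × V)) (v : V) : Prop :=
  v = vg ∨ ∃ e ∈ E', e.1 = v ∧ ∀ f ∈ E', Reach vg (E'.erase f) e.2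
termination_by E'.card
decreasing_by exact Finset.card_erase_lt_of_mem (by assumption)

/-- Runner has a winning strategy in the turn-based liveness sabotage game with liveness
parameter `b ≥ 1`, from the game-state `(E', v)`. -/
def Live : ℕ → Finset (V × V) → V → Prop
  | 0, _, _ => True
  | 1, E', v => ∃ e ∈ E', e.1 = v
  | n + 2, E', v => ∃ e ∈ E', e.1 = v ∧ ∀ f ∈ E', Live (n + 1) (E'.erase f) e.2

end Defs

/-- Formulas of sabotage modal logic over a set `P` of propositions. -/
inductive SML (P : Type*) : Type _
  | top : SML P
  | atom : P → SML P
  | neg : SML P → SML P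
  | and : SML P → SML P → SML P
  | dia : SML P → SML P
  | sab : SML P → SML P

namespace SML
/-- Disjunction. -/
def or {P : Type*} (φ ψ : SML P) : SML P := .neg (.and (.neg φ) (.neg ψ))
/-- Box. -/
def box {P : Type*} (φ : SML P) : SML P := .neg (.dia (.neg φ))
/-- Sabotage box `■`. -/
def sabBox {P : Type*} (φ : SML P) : SML P := .neg (.sab (.neg φ))
end SML

/-- Truth of an SML formula at world `w` of the sabotage model `(W, R, Val)`. -/
def Sat {W P : Type*} [DecidableEq W] (Val : P → Set W) :
    SML P → Finset (W × W) → W → Prop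
  | .top, _, _ => True
  | .atom q, _, w => w ∈ Val q
  | .neg φ, R, w => ¬ Sat Val φ R w
  | .and φ ψ, R, w => Sat Val φ R w ∧ Sat Val ψ R w
  | .dia φ, R, w => ∃ u, (w, u) ∈ R ∧ Sat Val φ R u
  | .sab φ, R, w => ∃ x ∈ R, Sat Val φ (R.erase x) w

/-- The formulas `ρ₀ := g`, `ρ_{n+1} := g ∨ ◇■ρ_n`, over the single proposition `g`. -/
def rho : ℕ → SML Unit
  | 0 => .atom ()
  | n + 1 => SML.or (.atom ()) (.dia (SML.sabBox (rho n)))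

/-- The formulas `γ₁ := ◇⊤`, `γ_{n+1} := ◇■γ_n` (the value at `0` is a dummy). -/
def gamma : ℕ → SML Unit
  | 0 => .top
  | 1 => .dia .top
  | n + 2 => .dia (SML.sabBox (gamma (n + 1)))

section AuxProof

variable {V : Type*} [DecidableEq V]

open Classical in
/-- The runner strategy extracted from `Reach`. -/
noncomputable def mySigma (vg : V) (s : TbState V) : Option (V × V) :=
  match s.2 with
  | Agent.d => none
  | Agent.r =>
    if h : ∃ e ∈ s.1.1, e.1 = s.1.2 ∧ ∀ f ∈ s.1.1, Reach vg (s.1.1.erase f) e.2 then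
      some h.choose
    else if h' : ∃ e ∈ s.1.1, e.1 = s.1.2 then some h'.choose
    else none

lemma mySigma_d (vg : V) (g : GState V) : mySigma vg (g, Agent.d) = none := rfl

lemma mySigma_r_pos (vg : V) (g : GState V)
    (h : ∃ e ∈ g.1, e.1 = g.2 ∧ ∀ f ∈ g.1, Reach vg (g.1.erase f) e.2) :
    mySigma vg (g, Agent.r) = some h.choose := by
  classical
  show (if h : _ then _ else _) = _
  rw [dif_pos h]

lemma mySigma_strat (vg : V) : TbStratR (mySigma vg) := by
  rintro ⟨g, a⟩ hne
  cases a with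
  | d => exact rfl
  | r =>
    show mySigma vg (g, Agent.r) ∈ tbActR (g, Agent.r)
    by_cases h : ∃ e ∈ g.1, e.1 = g.2 ∧ ∀ f ∈ g.1, Reach vg (g.1.erase f) e.2
    · rw [mySigma_r_pos vg g h]
      exact ⟨h.choose, h.choose_spec.1, h.choose_spec.2.1, rfl⟩
    · obtain ⟨a, e, he, hs, rfl⟩ := hne
      have h' : ∃ e ∈ g.1, e.1 = g.2 := ⟨e, he, hs⟩
      have : mySigma vg (g, Agent.r) = some h'.choose := by
        classical
        show (if h : _ then _ else _) = _
        rw [dif_neg h, dif_pos h']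
      rw [this]
      exact ⟨h'.choose, h'.choose_spec.1, h'.choose_spec.2, rfl⟩

lemma forward_reach (vg : V) (E' : Finset (V × V)) :
    ∀ v, Reach vg E' v →
      ∀ p : ℕ → Option (TbState V), IsPlay tbStep ((E', v), Agent.r) p →
        TbConsR (mySigma vg) p → ∃ n s, p n = some s ∧ s.1.2 = vg := by
  induction E' using Finset.strongInduction with
  | _ E' ih =>
    intro v hR p hp hc
    rw [Reach] at hR
    rcases hR with rfl | hR
    · exact ⟨0, _, hp.1, rfl⟩
    have hσ : mySigma vg ((E', v), Agent.r) = some hR.choose := mySigma_r_pos vg (E', v) hR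
    obtain ⟨εmem, εsrc, εall⟩ := hR.choose_spec
    set ε := hR.choose with hε
    -- step from the initial state exists
    have step0 : tbStepBy ((E', v), Agent.r) (some ε) none ((E', ε.2), Agent.d) :=
      ⟨⟨ε, εmem, εsrc, rfl⟩, rfl, rfl⟩
    have h1 : (p 1).isSome := hp.2.2 0 _ hp.1 ⟨_, some ε, none, step0⟩
    obtain ⟨t₁, ht₁⟩ := Option.isSome_iff_exists.mp h1
    obtain ⟨ad, har, had, hteq⟩ := hc 0 _ _ hp.1 ht₁
    have had' : ad = none := had
    rw [hσ, had'] at hteq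
    have ht₁' : t₁ = ((E', ε.2), Agent.d) := hteq
    subst ht₁'
    -- step from the demon state exists
    have step1 : tbStepBy ((E', ε.2), Agent.d) none (some ε) ((E'.erase ε, ε.2), Agent.r) :=
      ⟨rfl, ⟨ε, εmem, rfl⟩, rfl⟩
    have h2 : (p 2).isSome := hp.2.2 1 _ ht₁ ⟨_, none, some ε, step1⟩
    obtain ⟨t₂, ht₂⟩ := Option.isSome_iff_exists.mp h2
    obtain ⟨ad₂, har₂, had₂, hteq₂⟩ := hc 1 _ _ ht₁ ht₂
    obtain ⟨f, hf, rfl⟩ := had₂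
    rw [mySigma_d] at hteq₂
    have ht₂' : t₂ = ((E'.erase f, ε.2), Agent.r) := hteq₂
    subst ht₂'
    have hp' : IsPlay tbStep ((E'.erase f, ε.2), Agent.r) (fun n => p (n + 2)) := by
      refine ⟨ht₂, fun n t ht => hp.2.1 (n + 2) t ht, fun n s hs hst => hp.2.2 (n + 2) s hs hst⟩
    have hc' : TbConsR (mySigma vg) (fun n => p (n + 2)) :=
      fun n a b ha hb => hc (n + 2) a b ha hb
    obtain ⟨n, s, hn, hg⟩ := ih (E'.erase f) (Finset.erase_ssubset hf) ε.2 (εall f hf) _ hp' hc'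
    exact ⟨n + 2, s, hn, hg⟩

lemma backward_reach (vg : V) (σ : TbState V → Option (V × V)) (hσ : TbStratR σ)
    (E' : Finset (V × V)) :
    ∀ v, (∀ p : ℕ → Option (TbState V), IsPlay tbStep ((E', v), Agent.r) p → TbConsR σ p →
        ∃ n s, p n = some s ∧ s.1.2 = vg) → Reach vg E' v := by
  induction E' using Finset.strongInduction with
  | _ E' ih =>
    intro v hwin
    by_cases hv : v = vg
    · rw [Reach]; exact Or.inl hv
    rw [Reach]
    right
    by_cases hact : ∃ e ∈ E', e.1 = v
    · have hne : (tbActR ((E', v), Agent.r)).Nonempty := by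
        obtain ⟨e, he, hs⟩ := hact
        exact ⟨some e, e, he, hs, rfl⟩
      obtain ⟨ε, εmem, εsrc, heq⟩ := hσ _ hne
      have hσd : σ ((E', ε.2), Agent.d) = none := hσ ((E', ε.2), Agent.d) ⟨none, rfl⟩
      refine ⟨ε, εmem, εsrc, fun f hf => ?_⟩
      apply ih _ (Finset.erase_ssubset hf)
      intro p' hp' hc'
      -- prefix the play p' with the two steps
      set p : ℕ → Option (TbState V) := fun n =>
        match n with
        | 0 => some ((E', v), Agent.r)
        | 1 => some ((E', ε.2), Agent.d)
        | (m + 2) => p' m with hpdef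
      have step0 : tbStepBy ((E', v), Agent.r) (some ε) none ((E', ε.2), Agent.d) :=
        ⟨⟨ε, εmem, εsrc, rfl⟩, rfl, rfl⟩
      have step1 : tbStepBy ((E', ε.2), Agent.d) none (some f) ((E'.erase f, ε.2), Agent.r) :=
        ⟨rfl, ⟨f, hf, rfl⟩, rfl⟩
      have hplay : IsPlay tbStep ((E', v), Agent.r) p := by
        refine ⟨rfl, ?_, ?_⟩
        · intro n t ht
          match n with
          | 0 =>
            have : ((E', ε.2), Agent.d) = t := Option.some_inj.mp ht
            exact ⟨_, rfl, some ε, none, this ▸ step0⟩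
          | 1 =>
            have h0 : p' 0 = some t := ht
            rw [hp'.1] at h0
            have : ((E'.erase f, ε.2), Agent.r) = t := Option.some_inj.mp h0
            exact ⟨_, rfl, none, some f, this ▸ step1⟩
          | (m + 2) =>
            obtain ⟨s, hs, hst⟩ := hp'.2.1 m t ht
            exact ⟨s, hs, hst⟩
        · intro n s hs hst
          match n with
          | 0 => exact rfl
          | 1 => show (p' 0).isSome; rw [hp'.1]; rfl
          | (m + 2) => exact hp'.2.2 m s hs hst
      have hcons : TbConsR σ p := by
        intro n a b ha hb
        match n with
        | 0 =>
          have ha' : ((E', v), Agent.r) = a := Option.some_inj.mp ha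
          have hb' : ((E', ε.2), Agent.d) = b := Option.some_inj.mp hb
          subst ha'; subst hb'
          exact ⟨none, heq ▸ step0⟩
        | 1 =>
          have ha' : ((E', ε.2), Agent.d) = a := Option.some_inj.mp ha
          have hb0 : p' 0 = some b := hb
          rw [hp'.1] at hb0
          have hb' : ((E'.erase f, ε.2), Agent.r) = b := Option.some_inj.mp hb0
          subst ha'; subst hb'
          exact ⟨some f, hσd ▸ step1⟩
        | (m + 2) => exact hc' m a b ha hb
      obtain ⟨n, st, hn, hg⟩ := hwin p hplay hcons
      match n with
      | 0 =>
        have h0 : ((E', v), Agent.r) = st := Option.some_inj.mp hn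
        rw [← h0] at hg
        exact absurd hg hv
      | 1 =>
        have h0 : ((E', ε.2), Agent.d) = st := Option.some_inj.mp hn
        rw [← h0] at hg
        exact ⟨0, _, hp'.1, hg⟩
      | (m + 2) => exact ⟨m, st, hn, hg⟩
    · -- no available edge: the trivial play ends immediately
      exfalso
      set p : ℕ → Option (TbState V) := fun n =>
        match n with
        | 0 => some ((E', v), Agent.r)
        | (_ + 1) => none with hpdef
      have hplay : IsPlay tbStep ((E', v), Agent.r) p := by
        refine ⟨rfl, ?_, ?_⟩
        · intro n t ht
          match n with
          | 0 => exact absurd ht (by simp [hpdef])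
          | (m + 1) => exact absurd ht (by simp [hpdef])
        · intro n s hs hst
          match n with
          | 0 =>
            obtain ⟨t, ar, ad, har, _, _⟩ := hst
            have hs' : ((E', v), Agent.r) = s := Option.some_inj.mp hs
            subst hs'
            obtain ⟨e, he, hesrc, rfl⟩ := har
            exact absurd ⟨e, he, hesrc⟩ hact
          | (m + 1) => exact absurd hs (by simp [hpdef])
      have hcons : TbConsR σ p := by
        intro n a b ha hb
        match n with
        | 0 => exact absurd hb (by simp [hpdef])
        | (m + 1) => exact absurd hb (by simp [hpdef])
      obtain ⟨n, st, hn, hg⟩ := hwin p hplay hcons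
      match n with
      | 0 =>
        have h0 : ((E', v), Agent.r) = st := Option.some_inj.mp hn
        rw [← h0] at hg
        exact hv hg
      | (m + 1) => exact absurd hn (by simp [hpdef])

end AuxProof

/-- `Reach(E, v₀)` holds iff there is a positional strategy for the runner in
`S^tb(G)` such that every play from `((E,v₀),r)` consistent with it contains a state whose
runner position is `v_g`  (the ATL* statement `⟨⟨{r}⟩⟩ F g`). -/
theorem reach_iff_runner_can_enforce_Fg {V : Type*} [DecidableEq V] [Fintype V]
    (E : Finset (V × V)) (hE : E.Nonempty) (v₀ vg : V) :
    Reach vg E v₀ ↔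
      ∃ σr : TbState V → Option (V × V), TbStratR σr ∧
        ∀ p : ℕ → Option (TbState V), IsPlay tbStep ((E, v₀), Agent.r) p → TbConsR σr p →
          ∃ n s, p n = some s ∧ s.1.2 = vg := by
  constructor
  · intro hR
    exact ⟨mySigma vg, mySigma_strat vg, forward_reach vg E v₀ hR⟩
  · rintro ⟨σ, hσ, hwin⟩
    exact backward_reach vg σ hσ E v₀ hwin
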